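/- arXiv:1902.09377 — 3 statements merged into one kernel-verified Lean document; each statement's English description precedes it below -/
import Mathlib

section
/- Let G=(V,E) be a hypergraph of rank f (every hyperedge has at most f vertices) with positive vertex weights w. Let opt be the value of an optimal fractional vertex cover (minimize Σ_v w(v)x(v) subject to Σ_{v∈e} x(v) ≥ 1 for all e, x ≥ 0). Let δ : E → ℝ≥0 be a feasible edge packing, i.e., Σ_{e∋v} δ(e) ≤ w(v) for every v. Fix ε ∈ (0,1) and set β = ε/(f+ε). Then the set T = { v ∈ V : Σ_{e∋v} δ(e) ≥ (1−β)·w(v) } of β-tight vertices satisfies w(T) ≤ (f+ε)·opt. -/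
open Finset
open scoped Classical

theorem stmt_0 {V : Type*} [Fintype V]
    (E : Finset (Finset V)) (f : ℕ) (hf : 1 ≤ f)
    (hE : ∀ e ∈ E, e.Nonempty ∧ e.card ≤ f)
    (w : V → ℝ) (hw : ∀ v, 0 < w v)
    (opt : ℝ)
    (hopt : IsLeast {c : ℝ | ∃ x : V → ℝ, (∀ v, 0 ≤ x v) ∧
      (∀ e ∈ E, 1 ≤ ∑ v ∈ e, x v) ∧ c = ∑ v, w v * x v} opt)
    (δ : Finset V → ℝ) (hδ : ∀ e ∈ E, 0 ≤ δ e)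
    (hfeas : ∀ v : V, ∑ e ∈ E.filter (fun e => v ∈ e), δ e ≤ w v)
    (ε : ℝ) (hε : ε ∈ Set.Ioo (0:ℝ) 1) (β : ℝ) (hβ : β = ε / (f + ε)) :
    ∑ v ∈ Finset.univ.filter
        (fun v => (1 - β) * w v ≤ ∑ e ∈ E.filter (fun e => v ∈ e), δ e), w v
      ≤ (f + ε) * opt := by
  obtain ⟨⟨x, hx0, hxc, hxval⟩, _⟩ := hopt
  have hε0 := hε.1
  have hε1 := hε.2
  have hfpos : (0:ℝ) < f := by exact_mod_cast hf
  have hfe : (0:ℝ) < f + ε := by linarith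
  have h1β : 1 - β = f / (f + ε) := by rw [hβ]; field_simp; ring
  have h1βpos : 0 < 1 - β := by rw [h1β]; positivity
  set T := Finset.univ.filter
    (fun v => (1 - β) * w v ≤ ∑ e ∈ E.filter (fun e => v ∈ e), δ e) with hT
  have swap : ∀ g : Finset V → V → ℝ, ∑ e ∈ E, ∑ v ∈ e, g e v
      = ∑ v, ∑ e ∈ E.filter (fun e => v ∈ e), g e v := by
    intro g
    simp_rw [Finset.sum_filter]
    rw [Finset.sum_comm]
    apply Finset.sum_congr rfl
    intro e _
    simp [Finset.sum_ite_mem]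
  -- weak duality
  have hdual : ∑ e ∈ E, δ e ≤ opt := by
    calc ∑ e ∈ E, δ e ≤ ∑ e ∈ E, δ e * ∑ v ∈ e, x v := by
          apply Finset.sum_le_sum; intro e he
          nlinarith [hδ e he, hxc e he]
      _ = ∑ v, x v * ∑ e ∈ E.filter (fun e => v ∈ e), δ e := by
          simp_rw [Finset.mul_sum]
          rw [swap (fun e v => δ e * x v)]
          exact Finset.sum_congr rfl fun v _ =>
            Finset.sum_congr rfl fun e _ => mul_comm _ _
      _ ≤ ∑ v, x v * w v := by
          apply Finset.sum_le_sum; intro v _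
          exact mul_le_mul_of_nonneg_left (hfeas v) (hx0 v)
      _ = opt := by rw [hxval]; apply Finset.sum_congr rfl; intro v _; ring
  have hδE : 0 ≤ ∑ e ∈ E, δ e := Finset.sum_nonneg hδ
  -- main chain
  have hmain : (1 - β) * ∑ v ∈ T, w v ≤ (f : ℝ) * ∑ e ∈ E, δ e := by
    calc (1 - β) * ∑ v ∈ T, w v
        = ∑ v ∈ T, (1 - β) * w v := by rw [Finset.mul_sum]
      _ ≤ ∑ v ∈ T, ∑ e ∈ E.filter (fun e => v ∈ e), δ e := by
          apply Finset.sum_le_sum; intro v hv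
          simpa [hT] using (Finset.mem_filter.mp hv).2
      _ = ∑ e ∈ E, δ e * (T.filter (fun v => v ∈ e)).card := by
          simp_rw [Finset.sum_filter]
          rw [Finset.sum_comm]
          apply Finset.sum_congr rfl; intro e _
          rw [Finset.sum_ite, Finset.sum_const, Finset.sum_const_zero]
          simp [mul_comm]
      _ ≤ ∑ e ∈ E, δ e * f := by
          apply Finset.sum_le_sum; intro e he
          apply mul_le_mul_of_nonneg_left _ (hδ e he)
          have h1 : (T.filter (fun v => v ∈ e)).card ≤ e.card :=
            Finset.card_le_card (fun v hv => (Finset.mem_filter.mp hv).2)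
          have h2 := (hE e he).2
          exact_mod_cast h1.trans h2
      _ = (f : ℝ) * ∑ e ∈ E, δ e := by rw [← Finset.sum_mul]; ring
  have hfd : (f : ℝ) * ∑ e ∈ E, δ e ≤ f * opt :=
    mul_le_mul_of_nonneg_left hdual (le_of_lt hfpos)
  have key : (1 - β) * ∑ v ∈ T, w v ≤ f * opt := hmain.trans hfd
  rw [h1β] at key
  rw [hT] at *
  rw [div_mul_eq_mul_div, div_le_iff₀ hfe] at key
  nlinarith [key]
end

section
/- In Algorithm MWHVC with β = ε/(f+ε) and z = ⌈log₂(1/β)⌉, the level ℓ(v) of every vertex is always strictly less than z. (If ℓ(v) ≥ z, the sandwich inequality w(v)(1−2^{−ℓ(v)}) ≤ Σ_{e∈E(v)} δ(e) implies Σ_{e∈E(v)} δ(e) ≥ (1−β)·w(v), so v is β-tight and joins the cover before its level reaches z.) -/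
/-! If `v` were still outside the cover at level `ℓ ≥ z`, then `2^{-ℓ} ≤ 2^{-z} ≤ β`, so the
sandwich inequality gives `Σ_{e∈E(v)} δ(e) ≥ w(v)(1 - 2^{-ℓ}) ≥ (1 - β) w(v)`: the vertex is
`β`-tight and would already have joined the cover. -/

open Real

lemma inv_pow_le_of_ceil_logb_le {b x : ℝ} {n : ℕ} (hb : 1 < b) (hx : 0 < x)
    (hn : ⌈logb b (1 / x)⌉ ≤ n) : b⁻¹ ^ n ≤ x := by
  have hlog : logb b (1 / x) ≤ (n : ℝ) := by exact_mod_cast Int.ceil_le.mp hn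
  have hinv : 1 / x ≤ b ^ n := by
    rwa [logb_le_iff_le_rpow hb (by positivity), rpow_natCast] at hlog
  rw [inv_pow]
  exact inv_le_of_inv_le₀ hx (by simpa using hinv)

theorem stmt_5_general {V : Type*}
    (w : V → ℝ) (hw : ∀ v, 0 < w v)
    (f : ℕ) (ε : ℝ) (hε : ε ∈ Set.Ioc (0:ℝ) 1)
    (β : ℝ) (hβ : β = ε / (f + ε))
    (z : ℤ) (hz : z = ⌈Real.logb 2 (1/β)⌉)
    (S : ℕ → V → ℝ) (ℓ : ℕ → V → ℕ) (C : ℕ → Set V)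
    (hsand : ∀ i v, v ∉ C i → w v * (1 - (0.5:ℝ) ^ (ℓ i v)) ≤ S i v)
    (hjoin : ∀ i v, (1 - β) * w v ≤ S i v → v ∈ C i) :
    ∀ i v, v ∉ C i → (ℓ i v : ℤ) < z := by
  intro i v hv
  by_contra! hlevel
  have hβ_pos : 0 < β := by
    have := hε.1
    rw [hβ]; positivity
  have hpow : (0.5 : ℝ) ^ ℓ i v ≤ β := by
    have := inv_pow_le_of_ceil_logb_le one_lt_two hβ_pos (hz ▸ hlevel)
    norm_num at this ⊢
    exact this
  have htight : (1 - β) * w v ≤ S i v :=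
    calc (1 - β) * w v ≤ w v * (1 - (0.5 : ℝ) ^ ℓ i v) := by nlinarith [hw v]
      _ ≤ S i v := hsand i v hv
  exact hv (hjoin i v htight)

/-- In Algorithm MWHVC with `β = ε/(f+ε)` and `z = ⌈log₂(1/β)⌉`, the level of every
active vertex is always strictly less than `z`. Hypotheses: `S i v` denotes
`Σ_{e∈E(v)} δ(e)` at iteration `i`; the sandwich lower bound holds for vertices outside
the cover, and any `β`-tight vertex joins the cover. -/
theorem stmt_5 {V : Type*}
    (w : V → ℝ) (hw : ∀ v, 0 < w v)
    (f : ℕ) (hf : 1 ≤ f) (ε : ℝ) (hε : ε ∈ Set.Ioc (0:ℝ) 1)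
    (β : ℝ) (hβ : β = ε / (f + ε))
    (z : ℤ) (hz : z = ⌈Real.logb 2 (1/β)⌉)
    (S : ℕ → V → ℝ) (ℓ : ℕ → V → ℕ) (C : ℕ → Set V)
    (hsand : ∀ i v, v ∉ C i → w v * (1 - (0.5:ℝ) ^ (ℓ i v)) ≤ S i v)
    (hjoin : ∀ i v, (1 - β) * w v ≤ S i v → v ∈ C i) :
    ∀ i v, v ∉ C i → (ℓ i v : ℤ) < z :=
  stmt_5_general w hw f ε hε β hβ z hz S ℓ C hsand hjoin
end

section
/- Single-level-up property of the modified MWHVC algorithm: if in each iteration the dual increase for each vertex v not in the cover is δ_{i−1}(e) = δ_{i−2}(e) + deal_{i−1}(e)/2 for e ∈ E'(v), where Σ_{e∈E'(v)} deal_{i−1}(e) ≤ 0.5^{ℓ_{i−1}(v)+1}·w(v) and Σ_{e∈E(v)} δ_{i−2}(e) ≤ (1 − 0.5^{ℓ_{i−1}(v)+1})·w(v), then Σ_{e∈E(v)} δ_{i−1}(e) ≤ (1 − 0.5^{(ℓ_{i−1}(v)+1)+1})·w(v); consequently the level of v increases by at most 1 per iteration: ℓ_i(v) ≤ ℓ_{i−1}(v)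 + 1. -/
open Finset

theorem sum_eq_sum_add_sum_of_eq_add_ite_mem {ι M : Type*} [DecidableEq ι] [AddCommMonoid M]
    {s t : Finset ι} (hts : t ⊆ s) {f g h : ι → M}
    (hf : ∀ e ∈ s, f e = g e + if e ∈ t then h e else 0) :
    ∑ e ∈ s, f e = ∑ e ∈ s, g e + ∑ e ∈ t, h e := by
  rw [sum_congr rfl hf, sum_add_distrib, sum_ite_mem, inter_eq_right.mpr hts]

theorem one_sub_half_pow_mul_add_half_pow_mul_div_two (n : ℕ) (w : ℝ) :
    (1 - (0.5 : ℝ) ^ n) * w + (0.5 : ℝ) ^ n * w / 2 = (1 - (0.5 : ℝ) ^ (n + 1)) * w := by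
  ring

theorem le_of_forall_lt_one_sub_half_pow_mul {w S : ℝ} {m ℓ : ℕ}
    (hS : S ≤ (1 - (0.5 : ℝ) ^ (m + 1)) * w)
    (hℓ : ∀ ℓ'' < ℓ, w * (1 - (0.5 : ℝ) ^ (ℓ'' + 1)) < S) : ℓ ≤ m := by
  by_contra! hmℓ
  linarith [hℓ m hmℓ]

theorem stmt_13_general {ι : Type*} [DecidableEq ι] (Ev E' : Finset ι) (hE' : E' ⊆ Ev)
    (w : ℝ) (k : ℕ)
    (δold δnew deal : ι → ℝ)
    (hnew : ∀ e ∈ Ev, δnew e = δold e + (if e ∈ E' then deal e / 2 else 0))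
    (hvault : ∑ e ∈ E', deal e ≤ (0.5:ℝ) ^ (k+1) * w)
    (hold : ∑ e ∈ Ev, δold e ≤ (1 - (0.5:ℝ) ^ (k+1)) * w) :
    (∑ e ∈ Ev, δnew e ≤ (1 - (0.5:ℝ) ^ ((k+1)+1)) * w) ∧
    (∀ ℓ' : ℕ, (∀ ℓ'' < ℓ', w * (1 - (0.5:ℝ) ^ (ℓ''+1)) < ∑ e ∈ Ev, δnew e) →
      ℓ' ≤ k + 1) := by
  have hsum : ∑ e ∈ Ev, δnew e = ∑ e ∈ Ev, δold e + (∑ e ∈ E', deal e) / 2 := by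
    rw [sum_eq_sum_add_sum_of_eq_add_ite_mem hE' hnew, sum_div]
  have hbound : ∑ e ∈ Ev, δnew e ≤ (1 - (0.5:ℝ) ^ ((k+1)+1)) * w := by
    rw [hsum, ← one_sub_half_pow_mul_add_half_pow_mul_div_two]
    linarith
  exact ⟨hbound, fun ℓ' hℓ' => le_of_forall_lt_one_sub_half_pow_mul hbound hℓ'⟩

/-- Single-level-up property of the modified MWHVC algorithm: raising the duals by half
the deals keeps `Σ_{e∈E(v)} δ_{i−1}(e) ≤ (1 − 0.5^{(ℓ_{i−1}(v)+1)+1})·w(v)`, so the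
level of `v` (the level reached by the while loop, which increments while
`Σ δ > w(v)(1 − 0.5^{ℓ+1})`) increases by at most `1` per iteration. Here `k` plays the
role of `ℓ_{i−1}(v)`, `Ev = E(v)`, `E' = E'(v)`. -/
theorem stmt_13 {ι : Type*} [DecidableEq ι] (Ev E' : Finset ι) (hE' : E' ⊆ Ev)
    (w : ℝ) (hw : 0 < w) (k : ℕ)
    (δold δnew deal : ι → ℝ) (hdeal : ∀ e ∈ E', 0 ≤ deal e)
    (hnew : ∀ e ∈ Ev, δnew e = δold e + (if e ∈ E' then deal e / 2 else 0))
    (hvault : ∑ e ∈ E', deal e ≤ (0.5:ℝ) ^ (k+1) * w)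
    (hold : ∑ e ∈ Ev, δold e ≤ (1 - (0.5:ℝ) ^ (k+1)) * w) :
    (∑ e ∈ Ev, δnew e ≤ (1 - (0.5:ℝ) ^ ((k+1)+1)) * w) ∧
    (∀ ℓ' : ℕ, (∀ ℓ'' < ℓ', w * (1 - (0.5:ℝ) ^ (ℓ''+1)) < ∑ e ∈ Ev, δnew e) →
      ℓ' ≤ k + 1) :=
  stmt_13_general Ev E' hE' w k δold δnew deal hnew hvault hold
end
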